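/- arXiv:2108.08588 — 3 statements merged into one kernel-verified Lean document; each statement's English description precedes it below -/
import Mathlib

section
/- For any mixed metric generator M of the prism allied graph D_n^t (n ≥ 4), M contains at least one vertex from the inner cycle {p_1, ..., p_n}. -/
/-- Vertices of the prism allied graph `Dₙᵗ`. -/
inductive DtV (n : ℕ) : Type
  | p : Fin n → DtV n
  | q : Fin n → DtV n
  | r : Fin n → DtV n
  | s : Fin n → DtV n
  deriving DecidableEq


/-- Cyclic successor on `Fin n` (indices mod `n`). -/
def finSucc {n : ℕ} (i : Fin n) : Fin n :=
  ⟨(i.val + 1) % n, Nat.mod_lt _ (Nat.lt_of_le_of_lt (Nat.zero_le _) i.isLt)⟩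

/-- Base relation for the edges of the prism allied graph. -/
def DtRel (n : ℕ) : DtV n → DtV n → Prop := fun a b =>
  ∃ i : Fin n,
    (a = .p i ∧ b = .q i) ∨ (a = .p i ∧ b = .p (finSucc i)) ∨
    (a = .q i ∧ b = .q (finSucc i)) ∨ (a = .r i ∧ b = .q i) ∨
    (a = .r i ∧ b = .q (finSucc i)) ∨ (a = .r i ∧ b = .s i)

/-- The prism allied graph `Dₙᵗ`. -/
def Dt (n : ℕ) : SimpleGraph (DtV n) := SimpleGraph.fromRel (DtRel n)

/-- Vertices of the web graph `Wₙ`. -/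
inductive WV (n : ℕ) : Type
  | p : Fin n → WV n
  | q : Fin n → WV n
  | r : Fin n → WV n
  deriving DecidableEq

/-- Base relation for the edges of the web graph. -/
def WRel (n : ℕ) : WV n → WV n → Prop := fun a b =>
  ∃ i : Fin n,
    (a = .p i ∧ b = .q i) ∨ (a = .p i ∧ b = .p (finSucc i)) ∨
    (a = .q i ∧ b = .q (finSucc i)) ∨ (a = .q i ∧ b = .r i)

/-- The web graph `Wₙ`. -/
def W (n : ℕ) : SimpleGraph (WV n) := SimpleGraph.fromRel (WRel n)

/-- Distance from a vertex to an (unordered) edge: `d(x, uv) = min (d x u) (d x v)`. -/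
noncomputable def edgeDist {V : Type*} (G : SimpleGraph V) (w : V) (e : Sym2 V) : ℕ :=
  Sym2.lift ⟨fun u v => min (G.dist w u) (G.dist w v), fun u v => min_comm _ _⟩ e

/-- Distance from a vertex to a mixed element (a vertex or an edge). -/
noncomputable def mixedDist {V : Type*} (G : SimpleGraph V) (w : V) :
    V ⊕ G.edgeSet → ℕ :=
  Sum.elim (G.dist w) (fun e => edgeDist G w e.1)

/-- `M` is a mixed metric generator: every two distinct elements of `V(G) ∪ E(G)` are
distinguished by some vertex of `M`. -/
def IsMixedMetricGen {V : Type*} (G : SimpleGraph V) (M : Set V) : Prop :=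
  ∀ a b : V ⊕ G.edgeSet, a ≠ b → ∃ w ∈ M, mixedDist G w a ≠ mixedDist G w b

/-- `M` is a (vertex) resolving set. -/
def IsResolving {V : Type*} (G : SimpleGraph V) (M : Set V) : Prop :=
  ∀ a b : V, a ≠ b → ∃ w ∈ M, G.dist w a ≠ G.dist w b

/-- `M` is an edge resolving set. -/
def IsEdgeResolving {V : Type*} (G : SimpleGraph V) (M : Set V) : Prop :=
  ∀ a b : G.edgeSet, a ≠ b → ∃ w ∈ M, edgeDist G w a.1 ≠ edgeDist G w b.1

/-- The metric dimension of `G`. -/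
noncomputable def metricDim {V : Type*} (G : SimpleGraph V) : ℕ :=
  sInf {k | ∃ M : Set V, IsResolving G M ∧ M.ncard = k}

/-- The edge metric dimension of `G`. -/
noncomputable def edgeMetricDim {V : Type*} (G : SimpleGraph V) : ℕ :=
  sInf {k | ∃ M : Set V, IsEdgeResolving G M ∧ M.ncard = k}

/-- The mixed metric dimension of `G`. -/
noncomputable def mixedMetricDim {V : Type*} (G : SimpleGraph V) : ℕ :=
  sInf {k | ∃ M : Set V, IsMixedMetricGen G M ∧ M.ncard = k}


/-!
Collapsing each spoke `pᵢqᵢ` (sending `pᵢ ↦ qᵢ` and fixing everything else) maps edges to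
edges or to single vertices, so it does not increase distances. Hence a vertex `w` off the
inner cycle satisfies `d(w, qᵢ) ≤ d(w, pᵢ)`, i.e. `d(w, pᵢqᵢ) = d(w, qᵢ)`, and only an inner
vertex can distinguish the edge `pᵢqᵢ` from the vertex `qᵢ`.
-/

namespace SimpleGraph

variable {V W : Type*} {G : SimpleGraph V} {H : SimpleGraph W} {f : V → W}

theorem Walk.exists_walk_length_le_of_adj_imp
    (hf : ∀ ⦃u v⦄, G.Adj u v → f u = f v ∨ H.Adj (f u) (f v)) {u v : V} (p : G.Walk u v) :
    ∃ q : H.Walk (f u) (f v), q.length ≤ p.length := by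
  induction p with
  | nil => exact ⟨.nil, le_rfl⟩
  | cons h p ih =>
    obtain ⟨q, hq⟩ := ih
    rcases hf h with heq | hadj
    · exact ⟨q.copy heq.symm rfl, by simp only [Walk.length_copy, Walk.length_cons]; omega⟩
    · exact ⟨.cons hadj q, by simp only [Walk.length_cons]; omega⟩

theorem dist_le_of_adj_imp (hf : ∀ ⦃u v⦄, G.Adj u v → f u = f v ∨ H.Adj (f u) (f v))
    {u v : V} (h : G.Reachable u v) : H.dist (f u) (f v) ≤ G.dist u v := by
  obtain ⟨p, hp⟩ := h.exists_walk_length_eq_dist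
  obtain ⟨q, hq⟩ := Walk.exists_walk_length_le_of_adj_imp hf p
  exact (dist_le q).trans (hq.trans_eq hp)

end SimpleGraph

theorem IsMixedMetricGen.exists_dist_lt {V : Type*} {G : SimpleGraph V} {M : Set V}
    (hM : IsMixedMetricGen G M) {x y : V} (h : G.Adj x y) :
    ∃ w ∈ M, G.dist w x < G.dist w y := by
  obtain ⟨w, hwM, hw⟩ := hM (.inr ⟨s(x, y), h⟩) (.inl y) (by simp)
  exact ⟨w, hwM, lt_of_not_ge fun hle => hw (min_eq_right hle)⟩

namespace DtV

variable {n : ℕ}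

def collapseInner : DtV n → DtV n
  | .p j => .q j
  | x => x

theorem dtRel_collapseInner {u v : DtV n} (h : DtRel n u v) :
    u.collapseInner = v.collapseInner ∨ DtRel n u.collapseInner v.collapseInner := by
  obtain ⟨i, ⟨rfl, rfl⟩ | ⟨rfl, rfl⟩ | ⟨rfl, rfl⟩ | ⟨rfl, rfl⟩ | ⟨rfl, rfl⟩ | ⟨rfl, rfl⟩⟩ := h
  · exact .inl rfl
  all_goals exact .inr ⟨i, by simp [collapseInner]⟩

theorem adj_collapseInner {u v : DtV n} (h : (Dt n).Adj u v) :
    u.collapseInner = v.collapseInner ∨ (Dt n).Adj u.collapseInner v.collapseInner := by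
  rw [Dt, SimpleGraph.fromRel_adj] at h ⊢
  by_cases heq : u.collapseInner = v.collapseInner
  · exact .inl heq
  refine .inr ⟨heq, h.2.imp (fun h => ?_) (fun h => ?_)⟩
  · exact (dtRel_collapseInner h).resolve_left heq
  · exact (dtRel_collapseInner h).resolve_left (Ne.symm heq)

theorem adj_p_q (i : Fin n) : (Dt n).Adj (.p i) (.q i) := by
  rw [Dt, SimpleGraph.fromRel_adj]
  exact ⟨nofun, .inl ⟨i, .inl ⟨rfl, rfl⟩⟩⟩

theorem dist_q_le_dist_p {w : DtV n} (hw : w.collapseInner = w) (i : Fin n) :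
    (Dt n).dist w (.q i) ≤ (Dt n).dist w (.p i) := by
  by_cases hr : (Dt n).Reachable w (.p i)
  · have h := SimpleGraph.dist_le_of_adj_imp (fun _ _ => adj_collapseInner) hr
    rwa [hw] at h
  · have hr' : ¬ (Dt n).Reachable w (.q i) := fun h => hr (h.trans (adj_p_q i).symm.reachable)
    rw [SimpleGraph.dist_eq_zero_of_not_reachable hr', SimpleGraph.dist_eq_zero_of_not_reachable hr]

end DtV

theorem stmt1 (n : ℕ) (hn : 4 ≤ n) (M : Set (DtV n))
    (hM : IsMixedMetricGen (Dt n) M) : ∃ i : Fin n, DtV.p i ∈ M := by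
  obtain ⟨w, hwM, hlt⟩ := hM.exists_dist_lt (DtV.adj_p_q ⟨0, by omega⟩)
  cases w with
  | p j => exact ⟨j, hwM⟩
  | q j | r j | s j => exact absurd (DtV.dist_q_le_dist_p rfl _) (not_le.mpr hlt)
end

section
/- For the prism allied graph D_n^t with n ≥ 4, every mixed metric generator has cardinality at least n + 1. -/
namespace SimpleGraph

variable {V W : Type*} {G : SimpleGraph V} {H : SimpleGraph W}

lemma fromRel_adj_or_eq_of_rel {r : V → V → Prop} {r' : W → W → Prop} {f : V → W}
    (hf : ∀ ⦃a b⦄, r a b → r' (f a) (f b) ∨ f a = f b) {a b : V}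
    (h : (fromRel r).Adj a b) : (fromRel r').Adj (f a) (f b) ∨ f a = f b := by
  by_cases hab : f a = f b
  · exact Or.inr hab
  obtain ⟨-, hr | hr⟩ := (fromRel_adj _ _ _).1 h
  · exact (hf hr).imp (fun h' => (fromRel_adj _ _ _).2 ⟨hab, Or.inl h'⟩) id
  · exact (hf hr).imp (fun h' => (fromRel_adj _ _ _).2 ⟨hab, Or.inr h'⟩) (absurd ·.symm hab)

lemma Walk.exists_length_le_of_adj_or_eq {f : V → W}
    (hf : ∀ ⦃a b⦄, G.Adj a b → H.Adj (f a) (f b) ∨ f a = f b) {a b : V} (p : G.Walk a b) :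
    ∃ q : H.Walk (f a) (f b), q.length ≤ p.length := by
  induction p with
  | nil => exact ⟨.nil, le_rfl⟩
  | cons h _ ih =>
    obtain ⟨q, hq⟩ := ih
    rcases hf h with hadj | heq
    · exact ⟨.cons hadj q, by simpa using hq⟩
    · rw [heq]
      exact ⟨q, by simp; omega⟩

lemma dist_map_le {f : V → V} (hf : ∀ ⦃a b⦄, G.Adj a b → G.Adj (f a) (f b) ∨ f a = f b)
    (hfr : ∀ v, G.Reachable v (f v)) (a b : V) : G.dist (f a) (f b) ≤ G.dist a b := by
  by_cases hab : G.Reachable a b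
  · obtain ⟨p, hp⟩ := hab.exists_walk_length_eq_dist
    obtain ⟨q, hq⟩ := p.exists_length_le_of_adj_or_eq hf
    exact hp ▸ (dist_le q).trans hq
  · have : ¬G.Reachable (f a) (f b) := fun h => hab ((hfr a).trans (h.trans (hfr b).symm))
    rw [dist_eq_zero_of_not_reachable this]
    exact Nat.zero_le _

lemma dist_le_dist_of_forall_adj_eq {r s : V} (hrs : G.Adj r s) (hs : ∀ x, G.Adj s x → x = r)
    {w : V} (hw : w ≠ s) : G.dist w r ≤ G.dist w s := by
  classical
  let f : V → V := fun v => if v = s then r else v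
  have hf : ∀ ⦃a b⦄, G.Adj a b → G.Adj (f a) (f b) ∨ f a = f b := by
    intro a b hab
    by_cases ha : a = s
    · subst ha
      simp [f, hs b hab]
    by_cases hb : b = s
    · subst hb
      simp [f, hs a hab.symm]
    · simp [f, ha, hb, hab]
  have hfr : ∀ v, G.Reachable v (f v) := by
    intro v
    by_cases hv : v = s
    · simp only [f, hv, if_true]
      exact hrs.symm.reachable
    · simp only [f, hv, if_false, Reachable.refl]
  simpa [f, hw] using dist_map_le hf hfr w s

end SimpleGraph

open SimpleGraph

namespace IsMixedMetricGen

variable {V : Type*} {G : SimpleGraph V} {M : Set V}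

/-- Separating the vertex `u` from the edge `uv` means seeing `v` strictly closer than `u`. -/
lemma exists_dist_lt_s2 (hM : IsMixedMetricGen G M) {u v : V} (huv : G.Adj u v) :
    ∃ w ∈ M, G.dist w v < G.dist w u := by
  obtain ⟨w, hwM, hw⟩ := hM (.inl u) (.inr ⟨s(u, v), huv⟩) (by simp)
  refine ⟨w, hwM, ?_⟩
  simp only [mixedDist, Sum.elim_inl, Sum.elim_inr, edgeDist, Sym2.lift_mk] at hw
  omega

lemma mem_of_forall_adj_eq (hM : IsMixedMetricGen G M) {r s : V} (hrs : G.Adj r s)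
    (hs : ∀ x, G.Adj s x → x = r) : s ∈ M := by
  obtain ⟨w, hwM, hw⟩ := hM.exists_dist_lt_s2 hrs
  by_cases hws : w = s
  · exact hws ▸ hwM
  · exact absurd (dist_le_dist_of_forall_adj_eq hrs hs hws) (not_le.2 hw)

end IsMixedMetricGen

namespace Dt

variable {n : ℕ}

instance : Finite (DtV n) := by
  refine Finite.of_injective (fun v : DtV n => match v with
    | .p i => (i, (0 : Fin 4)) | .q i => (i, 1) | .r i => (i, 2) | .s i => (i, 3)) ?_
  intro a b h
  cases a <;> cases b <;> simp_all

lemma p_adj_q (i : Fin n) : (Dt n).Adj (.p i) (.q i) :=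
  (fromRel_adj _ _ _).2 ⟨by simp, Or.inl ⟨i, Or.inl ⟨rfl, rfl⟩⟩⟩

lemma r_adj_s (i : Fin n) : (Dt n).Adj (.r i) (.s i) :=
  (fromRel_adj _ _ _).2 ⟨by simp, Or.inl ⟨i, by simp⟩⟩

lemma eq_r_of_s_adj {i : Fin n} {x : DtV n} (h : (Dt n).Adj (.s i) x) : x = .r i := by
  obtain ⟨-, ⟨j, hrel⟩ | ⟨j, hrel⟩⟩ := (fromRel_adj _ _ _).1 h <;> simp_all

def pToQ : DtV n → DtV n
  | .p i => .q i
  | v => v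

lemma pToQ_adj_or_eq ⦃a b : DtV n⦄ (h : (Dt n).Adj a b) :
    (Dt n).Adj (pToQ a) (pToQ b) ∨ pToQ a = pToQ b := by
  refine fromRel_adj_or_eq_of_rel (fun a b ⟨i, hab⟩ => ?_) h
  rcases hab with ⟨rfl, rfl⟩ | ⟨rfl, rfl⟩ | ⟨rfl, rfl⟩ | ⟨rfl, rfl⟩ | ⟨rfl, rfl⟩ | ⟨rfl, rfl⟩
  · exact Or.inr rfl
  all_goals exact Or.inl ⟨i, by simp [pToQ]⟩

lemma dist_s_q_le_dist_s_p (i j : Fin n) :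
    (Dt n).dist (.s j) (.q i) ≤ (Dt n).dist (.s j) (.p i) := by
  have hfr : ∀ v : DtV n, (Dt n).Reachable v (pToQ v) := by
    rintro (i | i | i | i)
    exacts [(p_adj_q i).reachable, .rfl, .rfl, .rfl]
  exact dist_map_le pToQ_adj_or_eq hfr (.s j) (.p i)

end Dt

theorem stmt2 (n : ℕ) (hn : 4 ≤ n) (M : Set (DtV n))
    (hM : IsMixedMetricGen (Dt n) M) : n + 1 ≤ M.ncard := by
  have hS : Set.range DtV.s ⊆ M := by
    rintro _ ⟨i, rfl⟩
    exact hM.mem_of_forall_adj_eq (Dt.r_adj_s i) fun _ => Dt.eq_r_of_s_adj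
  obtain ⟨w, hwM, hw⟩ := hM.exists_dist_lt_s2 (Dt.p_adj_q ⟨0, by omega⟩).symm
  have hwS : w ∉ Set.range DtV.s := by
    rintro ⟨j, rfl⟩
    exact absurd (Dt.dist_s_q_le_dist_s_p _ j) (not_le.2 hw)
  have hcard : (Set.range (DtV.s : Fin n → DtV n)).ncard = n := by
    rw [Set.ncard_range_of_injective fun _ _ h => DtV.s.inj h, Nat.card_eq_fintype_card,
      Fintype.card_fin]
  calc n + 1 = (insert w (Set.range DtV.s)).ncard := by
        rw [Set.ncard_insert_of_notMem hwS, hcard]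
    _ ≤ M.ncard := Set.ncard_le_ncard (Set.insert_subset hwM hS)
end

section
/- For the web graph W_n with n ≥ 4, the mixed metric dimension equals n + 1. -/
/-!
Only `r i` tells the vertex `q i` from the pendant edge `q i r i`, so every mixed metric generator
contains all `n` pendant vertices; and since `d(r k, p i) = d(r k, q i) + 1`, no `r k` tells `q i`
from the edge `p i q i`, so one more vertex is needed. Conversely `{p z} ∪ {r i}` suffices: the
distance from `r k` to any element is a level depending only on the element's kind, plus the cyclic
distance from `k` to the one or two indices of the element (with a drop at `k = i` for `r i` and
`q i r i`). So the distances from the `r k` recover the level and the indices, which leaves only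
`r i` against `q i r i`, told apart by `r (i + 1)`, and `q i` against `p i q i`, told apart by `p z`.
-/
namespace SimpleGraph

variable {V : Type*} {G : SimpleGraph V}

lemma Walk.le_add_length_of_adj_le {D : V → ℕ} (hD : ∀ u v, G.Adj u v → D v ≤ D u + 1)
    {u v : V} (p : G.Walk u v) : D v ≤ D u + p.length := by
  induction p with
  | nil => simp
  | cons h _ ih => have := hD _ _ h; simp only [Walk.length_cons]; omega

lemma dist_eq_of_potential {w : V} (D : V → ℕ) (hw : D w = 0)
    (hD : ∀ u v, G.Adj u v → D v ≤ D u + 1)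
    (hdesc : ∀ v, v ≠ w → ∃ u, G.Adj u v ∧ D u + 1 = D v) (v : V) :
    G.dist w v = D v := by
  have hwalk : ∀ m v, D v = m → ∃ p : G.Walk w v, p.length = m := by
    intro m
    induction m with
    | zero =>
      intro v hv
      by_cases hvw : v = w
      · subst hvw; exact ⟨.nil, rfl⟩
      · obtain ⟨u, -, hu⟩ := hdesc v hvw; omega
    | succ m ih =>
      intro v hv
      have hvw : v ≠ w := by rintro rfl; omega
      obtain ⟨u, huv, hu⟩ := hdesc v hvw
      obtain ⟨p, hp⟩ := ih u (by omega)
      exact ⟨p.concat huv, by rw [Walk.length_concat, hp]⟩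
  obtain ⟨p, hp⟩ := hwalk (D v) v rfl
  obtain ⟨q, hq⟩ := Reachable.exists_walk_length_eq_dist ⟨p⟩
  have := q.le_add_length_of_adj_le hD
  have := G.dist_le p
  omega

lemma dist_le_dist_of_pendant {q r w : V} (hqr : G.Adj q r) (hr : ∀ v, G.Adj r v → v = q)
    (hw : w ≠ r) : G.dist w q ≤ G.dist w r := by
  by_cases hreach : G.Reachable r w
  · obtain ⟨p, hp⟩ := hreach.exists_walk_length_eq_dist
    cases p with
    | nil => exact absurd rfl hw
    | cons h p =>
      obtain rfl := hr _ h
      rw [dist_comm, dist_comm (u := w), ← hp, Walk.length_cons]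
      exact (dist_le p).trans (Nat.le_succ _)
  · have hq : ¬ G.Reachable q w := fun h => hreach (hqr.symm.reachable.trans h)
    rw [dist_comm, dist_eq_zero_of_not_reachable hq]
    exact Nat.zero_le _

end SimpleGraph

section MixedMetricDim

variable {V : Type*} {G : SimpleGraph V}

open SimpleGraph

lemma IsMixedMetricGen.mem_of_pendant {M : Set V} (hM : IsMixedMetricGen G M) {q r : V}
    (hqr : G.Adj q r) (hr : ∀ v, G.Adj r v → v = q) : r ∈ M := by
  obtain ⟨w, hwM, hw⟩ := hM (.inl q) (.inr ⟨s(q, r), hqr⟩) (by simp)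
  by_contra hrM
  have hwr : w ≠ r := by rintro rfl; exact hrM hwM
  exact hw (min_eq_left (dist_le_dist_of_pendant hqr hr hwr)).symm

/-- `mixedDist` on all of `V ⊕ Sym2 V`, so that edges can be written down without adjacency
proofs. -/
noncomputable def mixedDistSym2 (G : SimpleGraph V) (w : V) : V ⊕ Sym2 V → ℕ :=
  Sum.elim (G.dist w) (edgeDist G w)

lemma mixedDist_eq_mixedDistSym2 (w : V) (a : V ⊕ G.edgeSet) :
    mixedDist G w a = mixedDistSym2 G w (Sum.map id Subtype.val a) := by
  cases a <;> rfl

lemma mixedMetricDim_eq_of {k : ℕ} (M₀ : Set V) (hM₀ : IsMixedMetricGen G M₀)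
    (hcard : M₀.ncard = k) (hle : ∀ M, IsMixedMetricGen G M → k ≤ M.ncard) :
    mixedMetricDim G = k :=
  le_antisymm (Nat.sInf_le ⟨M₀, hM₀, hcard⟩)
    (le_csInf ⟨k, M₀, hM₀, hcard⟩ (by rintro _ ⟨M, hM, rfl⟩; exact hle M hM))

end MixedMetricDim

section CyclicIndex

variable {n : ℕ}

lemma finSucc_val_cases (i : Fin n) :
    (finSucc i).val = i.val + 1 ∨ (i.val + 1 = n ∧ (finSucc i).val = 0) := by
  have := i.isLt
  by_cases h : i.val + 1 = n
  · exact .inr ⟨h, by simp [finSucc, h]⟩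
  · exact .inl (Nat.mod_eq_of_lt (by omega))

def finPred (i : Fin n) : Fin n :=
  ⟨(i.val + (n - 1)) % n, Nat.mod_lt _ i.pos⟩

lemma finPred_val_cases (i : Fin n) :
    (finPred i).val + 1 = i.val ∨ (i.val = 0 ∧ (finPred i).val + 1 = n) := by
  have := i.isLt
  by_cases h : i.val = 0
  · refine .inr ⟨h, ?_⟩
    simp only [finPred, h, Nat.zero_add]
    rw [Nat.mod_eq_of_lt (by omega)]
    omega
  · refine .inl ?_
    simp only [finPred]
    rw [show i.val + (n - 1) = i.val - 1 + n by omega, Nat.add_mod_right,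
      Nat.mod_eq_of_lt (by omega)]
    omega

lemma finSucc_finPred (i : Fin n) : finSucc (finPred i) = i := by
  have := i.isLt
  ext
  rcases finSucc_val_cases (finPred i) with h | h <;> rcases finPred_val_cases i with h' | h' <;>
    omega

lemma finSucc_ne (hn : 2 ≤ n) (i : Fin n) : finSucc i ≠ i := by
  intro h
  have := congrArg Fin.val h
  rcases finSucc_val_cases i with h' | h' <;> omega

lemma finSucc_finSucc_ne (hn : 3 ≤ n) (i : Fin n) : finSucc (finSucc i) ≠ i := by
  intro h
  have := congrArg Fin.val h
  rcases finSucc_val_cases i with h' | h' <;> rcases finSucc_val_cases (finSucc i) with h'' | h'' <;>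
    omega

def cycDist (i j : Fin n) : ℕ := min (Nat.dist i.val j.val) (n - Nat.dist i.val j.val)

lemma cycDist_eq_zero_iff {i j : Fin n} : cycDist i j = 0 ↔ i = j := by
  have := i.isLt; have := j.isLt
  simp only [cycDist, Nat.dist, Fin.ext_iff]
  omega

@[simp]
lemma cycDist_self (i : Fin n) : cycDist i i = 0 := cycDist_eq_zero_iff.2 rfl

lemma cycDist_finSucc_le (k j : Fin n) :
    cycDist k (finSucc j) ≤ cycDist k j + 1 ∧ cycDist k j ≤ cycDist k (finSucc j) + 1 := by
  have := k.isLt; have := j.isLt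
  simp only [cycDist, Nat.dist]
  rcases finSucc_val_cases j with h | h <;> omega

lemma cycDist_finSucc_or_finPred (k j : Fin n) (h : cycDist k j ≠ 0) :
    cycDist k (finSucc j) + 1 = cycDist k j ∨ cycDist k (finPred j) + 1 = cycDist k j := by
  have := k.isLt; have := j.isLt; have := (finSucc j).isLt; have := (finPred j).isLt
  simp only [cycDist, Nat.dist] at h ⊢
  rcases finSucc_val_cases j with hs | hs <;> rcases finPred_val_cases j with hp | hp <;> omega

end CyclicIndex

namespace WebGraph

variable {n : ℕ}

instance : Finite (WV n) :=
  Finite.of_surjective (Sum.elim WV.p (Sum.elim WV.q WV.r))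
    (by rintro (i | i | i); exacts [⟨.inl i, rfl⟩, ⟨.inr (.inl i), rfl⟩, ⟨.inr (.inr i), rfl⟩])

lemma adj_p_q (i : Fin n) : (W n).Adj (.p i) (.q i) :=
  (SimpleGraph.fromRel_adj _ _ _).2 ⟨by simp, .inl ⟨i, .inl ⟨rfl, rfl⟩⟩⟩

lemma adj_p_p (hn : 2 ≤ n) (i : Fin n) : (W n).Adj (.p i) (.p (finSucc i)) :=
  (SimpleGraph.fromRel_adj _ _ _).2
    ⟨by simpa using (finSucc_ne hn i).symm, .inl ⟨i, .inr (.inl ⟨rfl, rfl⟩)⟩⟩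

lemma adj_q_q (hn : 2 ≤ n) (i : Fin n) : (W n).Adj (.q i) (.q (finSucc i)) :=
  (SimpleGraph.fromRel_adj _ _ _).2
    ⟨by simpa using (finSucc_ne hn i).symm, .inl ⟨i, .inr (.inr (.inl ⟨rfl, rfl⟩))⟩⟩

lemma adj_q_r (i : Fin n) : (W n).Adj (.q i) (.r i) :=
  (SimpleGraph.fromRel_adj _ _ _).2 ⟨by simp, .inl ⟨i, .inr (.inr (.inr ⟨rfl, rfl⟩))⟩⟩

lemma exists_eq_of_mem_edgeSet {e : Sym2 (WV n)} (he : e ∈ (W n).edgeSet) :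
    ∃ i : Fin n, e = s(.p i, .q i) ∨ e = s(.p i, .p (finSucc i)) ∨
      e = s(.q i, .q (finSucc i)) ∨ e = s(.q i, .r i) := by
  induction e using Sym2.ind with
  | _ a b =>
    rw [SimpleGraph.mem_edgeSet, W, SimpleGraph.fromRel_adj] at he
    obtain ⟨-, ⟨i, h⟩ | ⟨i, h⟩⟩ := he <;>
      refine ⟨i, ?_⟩ <;> rcases h with ⟨rfl, rfl⟩ | ⟨rfl, rfl⟩ | ⟨rfl, rfl⟩ | ⟨rfl, rfl⟩ <;>
      simp [Sym2.eq_swap]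

lemma eq_q_of_adj_r {i : Fin n} {v : WV n} (h : (W n).Adj (.r i) v) : v = .q i := by
  obtain ⟨j, hj | hj | hj | hj⟩ := exists_eq_of_mem_edgeSet ((SimpleGraph.mem_edgeSet _).2 h) <;>
    simp_all

lemma adj_le_add_one_of_edges {D : WV n → ℕ}
    (hpq : ∀ i, D (.p i) ≤ D (.q i) + 1 ∧ D (.q i) ≤ D (.p i) + 1)
    (hpp : ∀ i, D (.p i) ≤ D (.p (finSucc i)) + 1 ∧ D (.p (finSucc i)) ≤ D (.p i) + 1)
    (hqq : ∀ i, D (.q i) ≤ D (.q (finSucc i)) + 1 ∧ D (.q (finSucc i)) ≤ D (.q i) + 1)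
    (hqr : ∀ i, D (.q i) ≤ D (.r i) + 1 ∧ D (.r i) ≤ D (.q i) + 1) :
    ∀ u v, (W n).Adj u v → D v ≤ D u + 1 := by
  intro u v huv
  obtain ⟨i, h | h | h | h⟩ := exists_eq_of_mem_edgeSet ((SimpleGraph.mem_edgeSet _).2 huv) <;>
    rcases Sym2.eq_iff.1 h with ⟨rfl, rfl⟩ | ⟨rfl, rfl⟩
  all_goals have := hpq i; have := hpp i; have := hqq i; have := hqr i; omega

def distFromP (k : Fin n) : WV n → ℕ
  | .p i => cycDist k i
  | .q i => cycDist k i + 1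
  | .r i => cycDist k i + 2

def distFromR (k : Fin n) : WV n → ℕ
  | .p i => cycDist k i + 2
  | .q i => cycDist k i + 1
  | .r i => if i = k then 0 else cycDist k i + 2

lemma dist_p (hn : 2 ≤ n) (k : Fin n) (v : WV n) : (W n).dist (.p k) v = distFromP k v := by
  refine SimpleGraph.dist_eq_of_potential _ (by simp [distFromP]) ?_ ?_ v
  · apply adj_le_add_one_of_edges <;> intro i <;> simp only [distFromP] <;>
      first | omega | (have := cycDist_finSucc_le k i; omega)
  · intro v hv
    cases v with
    | p i =>
      have hne : cycDist k i ≠ 0 := fun h => hv (by rw [cycDist_eq_zero_iff.1 h])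
      rcases cycDist_finSucc_or_finPred k i hne with h | h
      · exact ⟨.p (finSucc i), (adj_p_p hn i).symm, by simp only [distFromP]; omega⟩
      · refine ⟨.p (finPred i), ?_, by simp only [distFromP]; omega⟩
        simpa only [finSucc_finPred] using adj_p_p hn (finPred i)
    | q i => exact ⟨.p i, adj_p_q i, rfl⟩
    | r i => exact ⟨.q i, adj_q_r i, rfl⟩

lemma dist_r (hn : 2 ≤ n) (k : Fin n) (v : WV n) : (W n).dist (.r k) v = distFromR k v := by
  refine SimpleGraph.dist_eq_of_potential _ (by simp [distFromR]) ?_ ?_ v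
  · apply adj_le_add_one_of_edges <;> intro i <;> simp only [distFromR] <;>
      first
      | omega
      | (have := cycDist_finSucc_le k i; omega)
      | (split_ifs with h <;> simp [h])
  · intro v hv
    cases v with
    | p i => exact ⟨.q i, (adj_p_q i).symm, rfl⟩
    | q i =>
      by_cases hik : i = k
      · subst hik
        exact ⟨.r i, (adj_q_r i).symm, by simp [distFromR]⟩
      have hne : cycDist k i ≠ 0 := fun h => hik (cycDist_eq_zero_iff.1 h).symm
      rcases cycDist_finSucc_or_finPred k i hne with h | h
      · exact ⟨.q (finSucc i), (adj_q_q hn i).symm, by simp only [distFromR]; omega⟩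
      · refine ⟨.q (finPred i), ?_, by simp only [distFromR]; omega⟩
        simpa only [finSucc_finPred] using adj_q_q hn (finPred i)
    | r i =>
      have hik : i ≠ k := fun h => hv (by rw [h])
      exact ⟨.q i, adj_q_r i, by simp [distFromR, hik]⟩

inductive Kind
  | p | q | r | pq | pp | qq | qr
  deriving DecidableEq

namespace Kind

def elem : Kind → Fin n → WV n ⊕ Sym2 (WV n)
  | p, i => .inl (.p i)
  | q, i => .inl (.q i)
  | r, i => .inl (.r i)
  | pq, i => .inr s(.p i, .q i)
  | pp, i => .inr s(.p i, .p (finSucc i))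
  | qq, i => .inr s(.q i, .q (finSucc i))
  | qr, i => .inr s(.q i, .r i)

/-- The least distance from a vertex `r k` to an element of this kind. -/
def level : Kind → ℕ
  | p | pp => 2
  | q | pq | qq => 1
  | r | qr => 0

def IsWide : Kind → Prop
  | pp | qq => True
  | _ => False

instance : DecidablePred IsWide := fun κ => by cases κ <;> unfold IsWide <;> infer_instance

/-- The indices `k` at which `r k` attains `level`. -/
def support (κ : Kind) (i : Fin n) : Finset (Fin n) :=
  if κ.IsWide then {i, finSucc i} else {i}

end Kind

open Kind

lemma exists_elem_eq (x : WV n ⊕ (W n).edgeSet) :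
    ∃ κ i, Sum.map id Subtype.val x = elem κ i := by
  rcases x with (i | i | i) | ⟨e, he⟩
  · exact ⟨p, i, rfl⟩
  · exact ⟨q, i, rfl⟩
  · exact ⟨r, i, rfl⟩
  · obtain ⟨i, rfl | rfl | rfl | rfl⟩ := exists_eq_of_mem_edgeSet he
    exacts [⟨pq, i, rfl⟩, ⟨pp, i, rfl⟩, ⟨qq, i, rfl⟩, ⟨qr, i, rfl⟩]

lemma level_le_and_eq_iff_mem_support (hn : 2 ≤ n) (κ : Kind) (i k : Fin n) :
    κ.level ≤ mixedDistSym2 (W n) (.r k) (elem κ i) ∧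
      (mixedDistSym2 (W n) (.r k) (elem κ i) = κ.level ↔ k ∈ κ.support i) := by
  cases κ <;>
    simp [elem, level, support, IsWide, mixedDistSym2, edgeDist, dist_r hn, distFromR,
      cycDist_eq_zero_iff, eq_comm (a := i)]

lemma self_mem_support (κ : Kind) (i : Fin n) : i ∈ κ.support i := by
  unfold support; split_ifs <;> simp

lemma level_eq_and_support_eq (hn : 2 ≤ n) {κ κ' : Kind} {i j : Fin n}
    (h : ∀ k, mixedDistSym2 (W n) (.r k) (elem κ i) = mixedDistSym2 (W n) (.r k) (elem κ' j)) :
    κ.level = κ'.level ∧ κ.support i = κ'.support j := by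
  have ha := level_le_and_eq_iff_mem_support hn κ i
  have hb := level_le_and_eq_iff_mem_support hn κ' j
  have hlevel : κ.level = κ'.level := by
    have h₁ := (ha i).2.2 (self_mem_support κ i)
    have h₂ := (hb i).1
    have h₃ := (ha j).1
    have h₄ := (hb j).2.2 (self_mem_support κ' j)
    rw [h] at h₁ h₃
    omega
  refine ⟨hlevel, Finset.ext fun k => ?_⟩
  rw [← (ha k).2, ← (hb k).2, h k, hlevel]

lemma eq_and_isWide_iff_of_support_eq (hn : 3 ≤ n) {κ κ' : Kind} {i j : Fin n}
    (h : κ.support i = κ'.support j) : i = j ∧ (κ.IsWide ↔ κ'.IsWide) := by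
  have hsucc := finSucc_ne (by omega) j
  have hsucc' := finSucc_ne (by omega) i
  unfold support at h
  by_cases hκ : κ.IsWide <;> by_cases hκ' : κ'.IsWide <;>
    simp only [hκ, hκ', if_true, if_false] at h
  · have hi : i ∈ ({j, finSucc j} : Finset _) := h ▸ by simp
    have hj : j ∈ ({i, finSucc i} : Finset _) := h ▸ by simp
    simp only [Finset.mem_insert, Finset.mem_singleton] at hi hj
    refine ⟨?_, iff_of_true hκ hκ'⟩
    rcases hi with rfl | rfl
    · rfl
    rcases hj with hj | hj
    · exact absurd hj.symm hsucc
    · exact absurd hj.symm (finSucc_finSucc_ne hn j)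
  · have := Finset.card_eq_two.2 ⟨_, _, hsucc'.symm, rfl⟩
    rw [h, Finset.card_singleton] at this
    omega
  · have := Finset.card_eq_two.2 ⟨_, _, hsucc.symm, rfl⟩
    rw [← h, Finset.card_singleton] at this
    omega
  · exact ⟨Finset.singleton_inj.1 h, iff_of_false hκ hκ'⟩

lemma eq_or_of_level_eq {κ κ' : Kind} (hlevel : κ.level = κ'.level)
    (hwide : κ.IsWide ↔ κ'.IsWide) :
    κ = κ' ∨ (κ = r ∧ κ' = qr) ∨ (κ = qr ∧ κ' = r) ∨ (κ = q ∧ κ' = pq) ∨ (κ = pq ∧ κ' = q) := by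
  cases κ <;> cases κ' <;> simp_all [level, IsWide]

lemma mixedDistSym2_r_ne_qr (hn : 2 ≤ n) (i : Fin n) :
    mixedDistSym2 (W n) (.r (finSucc i)) (elem r i) ≠
      mixedDistSym2 (W n) (.r (finSucc i)) (elem qr i) := by
  have := finSucc_ne hn i
  simp [elem, mixedDistSym2, edgeDist, dist_r hn, distFromR, this.symm]

lemma mixedDistSym2_q_ne_pq (hn : 2 ≤ n) (z i : Fin n) :
    mixedDistSym2 (W n) (.p z) (elem q i) ≠ mixedDistSym2 (W n) (.p z) (elem pq i) := by
  simp [elem, mixedDistSym2, edgeDist, dist_p hn, distFromP]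

lemma elem_eq_of_mixedDistSym2_eq (hn : 3 ≤ n) (z : Fin n) {κ κ' : Kind} {i j : Fin n}
    (h : ∀ w ∈ insert (.p z) (Set.range WV.r),
      mixedDistSym2 (W n) w (elem κ i) = mixedDistSym2 (W n) w (elem κ' j)) :
    elem κ i = elem κ' j := by
  have hn2 : 2 ≤ n := by omega
  obtain ⟨hlevel, hsupport⟩ :=
    level_eq_and_support_eq hn2 fun k => h _ (Set.mem_insert_of_mem _ ⟨k, rfl⟩)
  obtain ⟨rfl, hwide⟩ := eq_and_isWide_iff_of_support_eq hn hsupport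
  have hr := h _ (Set.mem_insert_of_mem _ ⟨finSucc i, rfl⟩)
  have hp := h _ (Set.mem_insert _ _)
  rcases eq_or_of_level_eq hlevel hwide with rfl | ⟨rfl, rfl⟩ | ⟨rfl, rfl⟩ | ⟨rfl, rfl⟩ | ⟨rfl, rfl⟩
  · rfl
  · exact absurd hr (mixedDistSym2_r_ne_qr hn2 i)
  · exact absurd hr.symm (mixedDistSym2_r_ne_qr hn2 i)
  · exact absurd hp (mixedDistSym2_q_ne_pq hn2 z i)
  · exact absurd hp.symm (mixedDistSym2_q_ne_pq hn2 z i)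

lemma isMixedMetricGen_insert_p_range_r (hn : 3 ≤ n) (z : Fin n) :
    IsMixedMetricGen (W n) (insert (.p z) (Set.range WV.r)) := by
  intro a b hab
  by_contra! hdist
  obtain ⟨κ, i, ha⟩ := exists_elem_eq a
  obtain ⟨κ', j, hb⟩ := exists_elem_eq b
  refine hab (Sum.map_injective.2 ⟨Function.injective_id, Subtype.val_injective⟩ ?_)
  rw [ha, hb]
  refine elem_eq_of_mixedDistSym2_eq hn z fun w hw => ?_
  rw [← ha, ← hb, ← mixedDist_eq_mixedDistSym2, ← mixedDist_eq_mixedDistSym2]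
  exact hdist w hw

lemma ncard_insert_range_r {x : WV n} (hx : x ∉ Set.range WV.r) :
    (insert x (Set.range WV.r)).ncard = n + 1 := by
  rw [Set.ncard_insert_of_notMem hx,
    Set.ncard_range_of_injective fun _ _ h => WV.r.inj h, Nat.card_fin]

lemma le_ncard_of_isMixedMetricGen (hn : 2 ≤ n) {M : Set (WV n)}
    (hM : IsMixedMetricGen (W n) M) : n + 1 ≤ M.ncard := by
  have hr : Set.range WV.r ⊆ M := by
    rintro _ ⟨i, rfl⟩
    exact hM.mem_of_pendant (adj_q_r i) fun _ => eq_q_of_adj_r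
  let i₀ : Fin n := ⟨0, by omega⟩
  obtain ⟨w, hwM, hw⟩ := hM (.inl (.q i₀)) (.inr ⟨s(.p i₀, .q i₀), adj_p_q i₀⟩) (by simp)
  have hwr : w ∉ Set.range WV.r := by
    rintro ⟨k, rfl⟩
    simp [mixedDist, edgeDist, dist_r hn, distFromR] at hw
  rw [← ncard_insert_range_r hwr]
  exact Set.ncard_le_ncard (Set.insert_subset hwM hr)

end WebGraph

theorem stmt10 (n : ℕ) (hn : 4 ≤ n) : mixedMetricDim (W n) = n + 1 :=
  mixedMetricDim_eq_of _ (WebGraph.isMixedMetricGen_insert_p_range_r (by omega) ⟨0, by omega⟩)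
    (WebGraph.ncard_insert_range_r (by simp))
    fun _ => WebGraph.le_ncard_of_isMixedMetricGen (by omega)
end
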